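/- Let Q be a finite nonempty set of vectors in ℝ^N (linear queries), σ : Q → Q' a bijection onto a set Q' of vectors in ℝ^N, with q' = σ(q). Let α ∈ (0,1), β ∈ (0,1), and assume m := 4 ln|Q|/α² is a positive integer. Let R = { y ∈ ℕ^N : ‖y‖₁ = m }, let x ∈ ℕ^N with ‖x‖₁ = n, and assume there exists y₀ ∈ R with c · max_{q'∈Q'} |⟨q',x⟩ − ⟨q',y₀⟩| ≤ (α/2)·n. Suppose c > 0 satisfies c ≤ α³n / (16 ln N · ln|Q| + 4 ln(1/β)). Let Y be the output of the small database mechanism M_{Exp,c}(x,u') over R with score u'(x,y) = −c · max_{q'∈Q'} |⟨q',x⟩ − ⟨q',y⟩|. Then with probability at least 1−β, max_{q∈Q} |⟨q,x⟩ − c⟨q',Y⟩| ≤ n · max_{q∈Q} ‖q − c·q'‖_∞ + αn. -/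

import Mathlib

open MeasureTheory Finset

/-- Two histograms `x, x'` over a universe of size `N` are `(i,j)`-neighbors:
`‖x − x'‖₁ ≤ 2`, `xᵢ ≠ x'ᵢ` and `xⱼ ≠ x'ⱼ`. -/
def Neighbors {N : ℕ} (i j : Fin N) (x x' : Fin N → ℕ) : Prop :=
  (∑ l, |(x l : ℤ) - (x' l : ℤ)|) ≤ 2 ∧ x i ≠ x' i ∧ x j ≠ x' j

/-- `dX` is a privacy budget: nonnegative, symmetric, zero on the diagonal,
satisfying the triangle inequality. -/
def PrivacyBudget {N : ℕ} (dX : Fin N → Fin N → ℝ) : Prop :=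
  (∀ i j, 0 ≤ dX i j) ∧ (∀ i j, dX i j = dX j i) ∧ (∀ i, dX i i = 0) ∧
    (∀ i j k, dX i j ≤ dX i k + dX k j)

/-- A mechanism `M` (a map from histograms to probability measures on `Y`) is `dX`-private. -/
def DXPrivate {N : ℕ} {Y : Type*} [MeasurableSpace Y]
    (dX : Fin N → Fin N → ℝ) (M : (Fin N → ℕ) → Measure Y) : Prop :=
  ∀ i j : Fin N, i ≠ j → ∀ x x' : Fin N → ℕ, Neighbors i j x x' →
    ∀ S : Set Y, MeasurableSet S →
      M x S ≤ ENNReal.ofReal (Real.exp (dX i j)) * M x' S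

/-! A synthetic database `y` whose answers, rescaled by `c`, miss `⟨q,x⟩` by more than
`n‖q - c q'‖ + αn` must miss `⟨q',x⟩` by more than `αn/c` (triangle inequality), so its score is
below `-αn`, while `y₀` scores at least `-αn/2`. Hence the at most `|R| ≤ N^m` bad outputs carry
probability at most `N^m exp (-αn/(4c))`, and the bound on `c` makes this at most `β`. -/

open Real

theorem Finset.card_le_pow_of_forall_sum_eq {ι : Type*} [Fintype ι] {m : ℕ}
    (R : Finset (ι → ℕ)) (hR : ∀ y ∈ R, ∑ i, y i = m) : #R ≤ Fintype.card ι ^ m := by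
  classical
  have hsurj : Function.Surjective (Sym.ofVector : List.Vector ι m → Sym ι m) := fun s =>
    ⟨⟨(s : Multiset ι).toList, by simp⟩, Subtype.ext (by simp [Sym.ofVector])⟩
  have : Finite {P : ι → ℕ // ∑ i, P i = m} := .of_equiv _ (Sym.equivNatSumOfFintype ι m)
  calc #R = Nat.card R := (Nat.card_eq_finsetCard R).symm
    _ ≤ Nat.card {P : ι → ℕ // ∑ i, P i = m} :=
      Nat.card_le_card_of_injective (fun y => ⟨y, hR y y.2⟩)
        fun a b h => Subtype.ext (by simpa using h)
    _ = Nat.card (Sym ι m) := Nat.card_congr (Sym.equivNatSumOfFintype ι m).symm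
    _ ≤ Nat.card (List.Vector ι m) := Nat.card_le_card_of_surjective _ hsurj
    _ = Fintype.card ι ^ m := by simp

theorem sum_exp_div_sum_exp_le {ι : Type*} {R B : Finset ι} (f : ι → ℝ) {t s : ℝ}
    (hB : ∀ y ∈ B, f y ≤ t) {y₀ : ι} (hy₀ : y₀ ∈ R) (hs : s ≤ f y₀) :
    (∑ y ∈ B, exp (f y)) / ∑ y ∈ R, exp (f y) ≤ #B * exp (t - s) := by
  have hnum : ∑ y ∈ B, exp (f y) ≤ #B * exp t := by
    simpa using sum_le_sum fun y hy => exp_le_exp.2 (hB y hy)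
  have hden : exp s ≤ ∑ y ∈ R, exp (f y) :=
    (exp_le_exp.2 hs).trans (single_le_sum (fun y _ => (exp_pos (f y)).le) hy₀)
  calc (∑ y ∈ B, exp (f y)) / ∑ y ∈ R, exp (f y) ≤ #B * exp t / exp s :=
        div_le_div₀ (by positivity) hnum (exp_pos s) hden
    _ = #B * exp (t - s) := by rw [exp_sub, mul_div_assoc]

theorem abs_sum_mul_le_norm_mul_sum {ι : Type*} [Fintype ι] (v x : ι → ℝ) (hx : ∀ l, 0 ≤ x l) :
    |∑ l, v l * x l| ≤ ‖v‖ * ∑ l, x l := by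
  rw [mul_sum]
  refine (abs_sum_le_sum_abs _ _).trans (sum_le_sum fun l _ => ?_)
  rw [abs_mul, abs_of_nonneg (hx l)]
  exact mul_le_mul_of_nonneg_right (by simpa using norm_le_pi_norm v l) (hx l)

theorem abs_sum_sub_mul_sum_le {ι : Type*} [Fintype ι] (q q' : ι → ℝ) {c : ℝ} (hc : 0 ≤ c)
    (x y : ι → ℕ) :
    |∑ l, q l * (x l : ℝ) - c * ∑ l, q' l * (y l : ℝ)| ≤
      (∑ l, (x l : ℝ)) * ‖q - c • q'‖ + c * |∑ l, q' l * (x l : ℝ) - ∑ l, q' l * (y l : ℝ)| := by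
  have hsplit : ∑ l, q l * (x l : ℝ) - c * ∑ l, q' l * (y l : ℝ) =
      ∑ l, (q - c • q') l * x l + c * (∑ l, q' l * (x l : ℝ) - ∑ l, q' l * (y l : ℝ)) := by
    simp only [Pi.sub_apply, Pi.smul_apply, smul_eq_mul, sub_mul, sum_sub_distrib, mul_sub,
      mul_sum, mul_assoc]
    ring
  rw [hsplit, mul_comm _ ‖_‖]
  refine (abs_add_le _ _).trans (add_le_add ?_ ?_)
  · exact abs_sum_mul_le_norm_mul_sum _ _ fun l => Nat.cast_nonneg _
  · rw [abs_mul, abs_of_nonneg hc]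

/-- With `a = log N`, `l = log |Q|` and `b = log (1/β)`, this says `N ^ m / β ≤ exp (αn / (4c))`. -/
theorem mul_log_add_le_div {α c n m a l b : ℝ} (hα : α ∈ Set.Ioo 0 1) (hc : 0 < c)
    (ha : 0 ≤ a) (hl : 0 ≤ l) (hb : 0 < b) (hm : m = 4 * l / α ^ 2)
    (hcle : c ≤ α ^ 3 * n / (16 * a * l + 4 * b)) :
    m * a + b ≤ α * n / (4 * c) := by
  obtain ⟨hα0, hα1⟩ := hα
  have hD : 0 < 16 * a * l + 4 * b := by positivity
  have hcD : c * (16 * a * l + 4 * b) ≤ α ^ 3 * n := (le_div_iff₀ hD).1 hcle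
  have hα2 : α ^ 2 ≤ 1 := pow_le_one₀ hα0.le hα1.le
  calc m * a + b ≤ (16 * a * l + 4 * b) / (4 * α ^ 2) := by
        rw [hm, le_div_iff₀ (by positivity)]
        field_simp
        nlinarith
    _ ≤ α * n / (4 * c) := by
        rw [div_le_div_iff₀ (by positivity) (by positivity)]
        nlinarith

theorem natCast_pow_mul_exp_neg_le {N m : ℕ} {β E : ℝ} (hβ : 0 < β)
    (h : m * log N + log (1 / β) ≤ E) : (N : ℝ) ^ m * exp (-E) ≤ β := by
  have hpow : (N : ℝ) ^ m ≤ exp (m * log N) := by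
    rcases N.eq_zero_or_pos with rfl | hN
    · simpa using pow_le_one₀ le_rfl zero_le_one
    · rw [← log_pow, exp_log (by positivity)]
  calc (N : ℝ) ^ m * exp (-E) ≤ exp (m * log N) * exp (-E) := by gcongr
    _ = exp (m * log N - E) := by rw [← exp_add, sub_eq_add_neg]
    _ ≤ exp (-log (1 / β)) := exp_le_exp.2 (by linarith)
    _ = β := by rw [one_div, log_inv, neg_neg, exp_log hβ]

theorem stmt_12_general {N : ℕ} (Q : Finset (Fin N → ℝ)) (hQ : Q.Nonempty)
    (σ : (Fin N → ℝ) → (Fin N → ℝ))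
    (α β : ℝ) (hα : α ∈ Set.Ioo (0 : ℝ) 1) (hβ : β ∈ Set.Ioo (0 : ℝ) 1)
    (m : ℕ) (hmval : (m : ℝ) = 4 * Real.log (Q.card : ℝ) / α ^ 2)
    (R : Finset (Fin N → ℕ)) (hRmem : ∀ y : Fin N → ℕ, y ∈ R ↔ ∑ l, y l = m)
    (x : Fin N → ℕ) (n : ℕ) (hn : ∑ l, x l = n)
    (c : ℝ) (hc : 0 < c)
    (hcle : c ≤ α ^ 3 * n / (16 * Real.log (N : ℝ) * Real.log (Q.card : ℝ)
        + 4 * Real.log (1 / β)))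
    (u' : (Fin N → ℕ) → ℝ)
    (hu' : ∀ y : Fin N → ℕ, u' y =
      -c * Q.sup' hQ (fun q => |(∑ l, σ q l * (x l : ℝ)) - ∑ l, σ q l * (y l : ℝ)|))
    (y₀ : Fin N → ℕ) (hy₀ : y₀ ∈ R)
    (hy₀close : c * Q.sup' hQ
        (fun q => |(∑ l, σ q l * (x l : ℝ)) - ∑ l, σ q l * (y₀ l : ℝ)|) ≤ (α / 2) * n) :
    (∑ y ∈ R.filter (fun y =>
        Q.sup' hQ (fun q => |(∑ l, q l * (x l : ℝ)) - c * ∑ l, σ q l * (y l : ℝ)|) >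
          (n : ℝ) * Q.sup' hQ (fun q => ‖q - c • σ q‖) + α * n),
      Real.exp (u' y / (2 * c))) / (∑ y ∈ R, Real.exp (u' y / (2 * c))) ≤ β := by
  set bad := R.filter fun y =>
    Q.sup' hQ (fun q => |(∑ l, q l * (x l : ℝ)) - c * ∑ l, σ q l * (y l : ℝ)|) >
      (n : ℝ) * Q.sup' hQ (fun q => ‖q - c • σ q‖) + α * n
  have hxsum : ∑ l, (x l : ℝ) = n := by exact_mod_cast hn
  have hbad : ∀ y ∈ bad, u' y / (2 * c) ≤ -(α * n) / (2 * c) := by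
    intro y hy
    have herr : Q.sup' hQ (fun q => |(∑ l, q l * (x l : ℝ)) - c * ∑ l, σ q l * (y l : ℝ)|) ≤
        n * Q.sup' hQ (fun q => ‖q - c • σ q‖) - u' y := by
      refine sup'_le _ _ fun q hq => (abs_sum_sub_mul_sum_le q (σ q) hc.le x y).trans ?_
      rw [hxsum, hu', neg_mul, sub_neg_eq_add]
      gcongr
      · exact le_sup' (fun q => ‖q - c • σ q‖) hq
      · exact le_sup' (fun q => |(∑ l, σ q l * (x l : ℝ)) - ∑ l, σ q l * (y l : ℝ)|) hq
    gcongr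
    linarith [(mem_filter.1 hy).2]
  have hgood : -(α * n) / (4 * c) ≤ u' y₀ / (2 * c) := by
    rw [hu', div_le_div_iff₀ (by positivity) (by positivity)]
    nlinarith
  have hcard : (#bad : ℝ) ≤ (N : ℝ) ^ m := by
    exact_mod_cast (card_filter_le _ _).trans
      (by simpa using R.card_le_pow_of_forall_sum_eq fun y hy => (hRmem y).1 hy)
  calc (∑ y ∈ bad, exp (u' y / (2 * c))) / ∑ y ∈ R, exp (u' y / (2 * c))
      ≤ #bad * exp (-(α * n) / (2 * c) - -(α * n) / (4 * c)) :=
        sum_exp_div_sum_exp_le _ hbad hy₀ hgood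
    _ = #bad * exp (-(α * n / (4 * c))) := by congr 2; field_simp; ring
    _ ≤ (N : ℝ) ^ m * exp (-(α * n / (4 * c))) := by gcongr
    _ ≤ β := natCast_pow_mul_exp_neg_le hβ.1 <| mul_log_add_le_div hα hc
        (log_natCast_nonneg N) (log_natCast_nonneg _) (log_pos (one_lt_one_div hβ.1 hβ.2))
        hmval hcle

/-- Utility of the small database mechanism (Theorem 4.5): letting `Y` be the output of
`SmallDB(x, Q', c, α/2)` with `c ≤ α³n / (16 ln N · ln|Q| + 4 ln(1/β))`, with probability
at least `1 − β`, `max_{q∈Q} |⟨q,x⟩ − c⟨q',Y⟩| ≤ n·max_{q∈Q} ‖q − c·q'‖∞ + αn`. -/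
theorem stmt_12 {N : ℕ} (hN : 0 < N) (Q : Finset (Fin N → ℝ)) (hQ : Q.Nonempty)
    (σ : (Fin N → ℝ) → (Fin N → ℝ)) (hσ : Set.InjOn σ Q)
    (α β : ℝ) (hα : α ∈ Set.Ioo (0 : ℝ) 1) (hβ : β ∈ Set.Ioo (0 : ℝ) 1)
    (m : ℕ) (hm : 0 < m) (hmval : (m : ℝ) = 4 * Real.log (Q.card : ℝ) / α ^ 2)
    (R : Finset (Fin N → ℕ)) (hRmem : ∀ y : Fin N → ℕ, y ∈ R ↔ ∑ l, y l = m)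
    (x : Fin N → ℕ) (n : ℕ) (hn : ∑ l, x l = n)
    (c : ℝ) (hc : 0 < c)
    (hcle : c ≤ α ^ 3 * n / (16 * Real.log (N : ℝ) * Real.log (Q.card : ℝ)
        + 4 * Real.log (1 / β)))
    (u' : (Fin N → ℕ) → ℝ)
    (hu' : ∀ y : Fin N → ℕ, u' y =
      -c * Q.sup' hQ (fun q => |(∑ l, σ q l * (x l : ℝ)) - ∑ l, σ q l * (y l : ℝ)|))
    (y₀ : Fin N → ℕ) (hy₀ : y₀ ∈ R)
    (hy₀close : c * Q.sup' hQ
        (fun q => |(∑ l, σ q l * (x l : ℝ)) - ∑ l, σ q l * (y₀ l : ℝ)|) ≤ (α / 2) * n) :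
    (∑ y ∈ R.filter (fun y =>
        Q.sup' hQ (fun q => |(∑ l, q l * (x l : ℝ)) - c * ∑ l, σ q l * (y l : ℝ)|) >
          (n : ℝ) * Q.sup' hQ (fun q => ‖q - c • σ q‖) + α * n),
      Real.exp (u' y / (2 * c))) / (∑ y ∈ R, Real.exp (u' y / (2 * c))) ≤ β :=
  stmt_12_general Q hQ σ α β hα hβ m hmval R hRmem x n hn c hc hcle u' hu' y₀ hy₀ hy₀close
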